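/- Let u be an integer with u ≡ 3 (mod 4) such that p = u² + 64 is prime. Then the point (u/4, −u/8) is a rational point on the Neumann–Setzer curve E₀ : y² + xy = x³ − ((u+1)/4)x² + 4x − u, and it has order exactly 2 in the group of rational points E₀(ℚ). -/

import Mathlib

/-!
The point `P = (u/4, -u/8)` satisfies `2y + a₁x + a₃ = 0`, i.e. `P = -P`, so `2P = 0`. It is
nonsingular because the `X`-partial derivative of the curve equation at `P` is
`-(u² + 64)/16`, which never vanishes over `ℚ`.
-/

/-- The Neumann–Setzer curve `E₀ : y² + xy = x³ − ((u+1)/4)x² + 4x − u` over `ℚ`,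
in affine coordinates. -/
noncomputable def NeumannSetzerE₀ (u : ℤ) : WeierstrassCurve.Affine ℚ :=
  { a₁ := 1, a₂ := -(((u : ℚ) + 1) / 4), a₃ := 0, a₄ := 4, a₆ := -(u : ℚ) }

namespace WeierstrassCurve.Affine

variable {R : Type*} [CommRing R] {W : WeierstrassCurve.Affine R}

lemma nonsingular_iff_of_Y_eq_negY {x y : R} (hy : y = W.negY x y) :
    W.Nonsingular x y ↔ W.Equation x y ∧ W.a₁ * y ≠ 3 * x ^ 2 + 2 * W.a₂ * x + W.a₄ := by
  rw [nonsingular_iff, ← negY, ← hy]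
  simp only [ne_eq, not_true_eq_false, or_false]

lemma Point.addOrderOf_some_of_Y_eq_negY {F : Type*} [Field F] [DecidableEq F]
    {W : WeierstrassCurve.Affine F} {x y : F} {h : W.Nonsingular x y} (hy : y = W.negY x y) : addOrderOf (some _ _ h) = 2 := by
  have := Fact.mk Nat.prime_two
  exact addOrderOf_eq_prime (by rw [two_nsmul]; exact add_self_of_Y_eq hy) (some_ne_zero h)

end WeierstrassCurve.Affine

lemma neumannSetzerE₀_negY (u : ℤ) :
    (NeumannSetzerE₀ u).negY ((u : ℚ) / 4) (-(u : ℚ) / 8) = -(u : ℚ) / 8 := by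
  simp only [NeumannSetzerE₀, WeierstrassCurve.Affine.negY]
  ring

lemma neumannSetzerE₀_equation (u : ℤ) :
    (NeumannSetzerE₀ u).Equation ((u : ℚ) / 4) (-(u : ℚ) / 8) := by
  rw [WeierstrassCurve.Affine.equation_iff]
  simp only [NeumannSetzerE₀]
  ring

lemma neumannSetzerE₀_nonsingular (u : ℤ) :
    (NeumannSetzerE₀ u).Nonsingular ((u : ℚ) / 4) (-(u : ℚ) / 8) := by
  rw [WeierstrassCurve.Affine.nonsingular_iff_of_Y_eq_negY (neumannSetzerE₀_negY u).symm]
  refine ⟨neumannSetzerE₀_equation u, fun h ↦ ?_⟩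
  have hX : (u : ℚ) ^ 2 + 64 = 0 := by
    simp only [NeumannSetzerE₀] at h
    linear_combination -16 * h
  have : 0 < (u : ℚ) ^ 2 + 64 := by positivity
  linarith

theorem stmt_4_general (u : ℤ) :
    ∃ h : (NeumannSetzerE₀ u).Nonsingular ((u : ℚ) / 4) (-(u : ℚ) / 8),
      addOrderOf (WeierstrassCurve.Affine.Point.some _ _ h) = 2 :=
  ⟨neumannSetzerE₀_nonsingular u,
    WeierstrassCurve.Affine.Point.addOrderOf_some_of_Y_eq_negY (neumannSetzerE₀_negY u).symm⟩

theorem stmt_4 (u : ℤ) (hu : u % 4 = 3) (hp : Prime (u ^ 2 + 64)) :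
    ∃ h : (NeumannSetzerE₀ u).Nonsingular ((u : ℚ) / 4) (-(u : ℚ) / 8),
      addOrderOf (WeierstrassCurve.Affine.Point.some _ _ h) = 2 :=
  stmt_4_general u
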